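/- arXiv:2405.15917 — 5 statements merged into one kernel-verified Lean document; each statement's English description precedes it below -/
import Mathlib

section
/- For every n ∈ ℕ and all x, y ∈ ℝ with x ≠ y, the Christoffel–Darboux identity holds: Σ_{k=0}^n h_k(x)·h_k(y) = √((n+1)/2) · (h_{n+1}(x)·h_n(y) − h_n(x)·h_{n+1}(y)) / (x − y). -/
/-!
Rescaling the Gaussian gives `h_k(x) = π^{-1/4} (k!)^{-1/2} He_k(√2 x) e^{-x²/2}` with `He_k` the
probabilists' Hermite polynomials, and `X He_k = He_{k+1} + k He_{k-1}` turns into the symmetric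
three-term recurrence `x h_k = √((k+1)/2) h_{k+1} + √(k/2) h_{k-1}`. For any sequence satisfying such
a recurrence, multiplying the sum by `x - y` makes it telescope.
-/

open MeasureTheory Filter Set

/-- The `k`-th Hermite function
`h_k(x) = (-1)^k π^{-1/4} 2^{-k/2} (k!)^{-1/2} e^{x²/2} (d^k/dx^k)(e^{-x²})`. -/
noncomputable def hermiteFun (k : ℕ) (x : ℝ) : ℝ :=
  (-1 : ℝ) ^ k *
    (Real.pi ^ (-(1 : ℝ) / 4) * (2 : ℝ) ^ (-(k : ℝ) / 2) *
      ((k.factorial : ℝ)) ^ (-(1 : ℝ) / 2)) *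
    Real.exp (x ^ 2 / 2) * iteratedDeriv k (fun y : ℝ => Real.exp (-y ^ 2)) x

/-- The `n`-th partial sum of the Hermite series of `f`:
`S_n f = ∑_{k=0}^n (∫ f h_k) h_k`. -/
noncomputable def hermitePartialSum (n : ℕ) (f : ℝ → ℝ) (x : ℝ) : ℝ :=
  ∑ k ∈ Finset.range (n + 1), (∫ y : ℝ, f y * hermiteFun k y) * hermiteFun k x

namespace Polynomial

theorem derivative_hermite_succ (n : ℕ) :
    derivative (hermite (n + 1)) = ((n + 1 : ℕ) : ℤ[X]) * hermite n := by
  induction n with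
  | zero => simp
  | succ n ih =>
    simp only [hermite_succ (n + 1), derivative_sub, derivative_mul, derivative_X,
      derivative_natCast, ih]
    rw [hermite_succ n]
    push_cast
    ring

theorem derivative_hermite (n : ℕ) :
    derivative (hermite n) = (n : ℤ[X]) * hermite (n - 1) := by
  cases n with
  | zero => simp
  | succ n => exact derivative_hermite_succ n

theorem X_mul_hermite (n : ℕ) :
    X * hermite n = hermite (n + 1) + (n : ℤ[X]) * hermite (n - 1) := by
  rw [hermite_succ, derivative_hermite, sub_add_cancel]

end Polynomial

open Polynomial

-- At `k = 0` the term `a 0 * p (0 - 1) x = a 0 * p 0 x` is harmless: it cancels in the symmetric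
-- combination below, so no condition on `a 0` is needed.
theorem sub_mul_sum_mul_eq_of_three_term {R : Type*} [CommRing R] (p : ℕ → R → R) (a : ℕ → R)
    (hp : ∀ k x, x * p k x = a (k + 1) * p (k + 1) x + a k * p (k - 1) x)
    (n : ℕ) (x y : R) :
    (x - y) * ∑ k ∈ Finset.range (n + 1), p k x * p k y =
      a (n + 1) * (p (n + 1) x * p n y - p n x * p (n + 1) y) := by
  induction n with
  | zero =>
    simp only [zero_add, Finset.sum_range_one]
    linear_combination p 0 y * hp 0 x - p 0 x * hp 0 y
  | succ n ih =>
    have hx := hp (n + 1) x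
    have hy := hp (n + 1) y
    rw [Nat.add_sub_cancel] at hx hy
    rw [Finset.sum_range_succ, mul_add, ih]
    linear_combination p (n + 1) y * hx - p (n + 1) x * hy

theorem iteratedDeriv_exp_neg_sq (k : ℕ) (x : ℝ) :
    iteratedDeriv k (fun y => Real.exp (-y ^ 2)) x =
      (-√2) ^ k * aeval (√2 * x) (hermite k) * Real.exp (-x ^ 2) := by
  have hsq (y : ℝ) : (√2 * y) ^ 2 / 2 = y ^ 2 := by
    rw [mul_pow, Real.sq_sqrt zero_le_two]; ring
  have hscale := congrFun (iteratedDeriv_comp_const_mul (n := k)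
    (f := fun u : ℝ => Real.exp (-(u ^ 2 / 2))) (by fun_prop) √2) x
  simp only [hsq] at hscale
  rw [hscale, iteratedDeriv_eq_iterate, deriv_gaussian_eq_hermite_mul_gaussian, hsq, neg_pow]
  ring

theorem hermiteFun_eq (k : ℕ) (x : ℝ) :
    hermiteFun k x =
      Real.pi ^ (-(1 : ℝ) / 4) / √(k.factorial) * aeval (√2 * x) (hermite k) *
        Real.exp (-x ^ 2 / 2) := by
  have hsign : (-1 : ℝ) ^ k * (-√2) ^ k = √2 ^ k := by
    rw [← mul_pow]; simp
  have hpow : (2 : ℝ) ^ (-(k : ℝ) / 2) * √2 ^ k = 1 := by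
    rw [Real.sqrt_eq_rpow, ← Real.rpow_natCast, ← Real.rpow_mul zero_le_two,
      ← Real.rpow_add two_pos]
    ring_nf; simp
  have hfact : ((k.factorial : ℝ)) ^ (-(1 : ℝ) / 2) = (√(k.factorial))⁻¹ := by
    rw [Real.sqrt_eq_rpow, ← Real.rpow_neg (Nat.cast_nonneg _)]; ring_nf
  have hexp : Real.exp (x ^ 2 / 2) * Real.exp (-x ^ 2) = Real.exp (-x ^ 2 / 2) := by
    rw [← Real.exp_add]; ring_nf
  rw [hermiteFun, iteratedDeriv_exp_neg_sq, hfact, ← hexp]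
  set P := Real.pi ^ (-(1 : ℝ) / 4) * (√(k.factorial))⁻¹ * aeval (√2 * x) (hermite k) *
    Real.exp (x ^ 2 / 2) * Real.exp (-x ^ 2)
  linear_combination (P * (2 : ℝ) ^ (-(k : ℝ) / 2)) * hsign + P * hpow

theorem sqrt_div_two_div_sqrt_factorial_succ (k : ℕ) :
    √(((k : ℝ) + 1) / 2) / √((k + 1).factorial) = 1 / (√2 * √(k.factorial)) := by
  rw [Nat.factorial_succ, Nat.cast_mul, Real.sqrt_mul (by positivity), Real.sqrt_div (by positivity)]
  push_cast
  field_simp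

theorem sqrt_div_two_div_sqrt_factorial_pred (k : ℕ) :
    √((k : ℝ) / 2) / √((k - 1).factorial) = k / (√2 * √(k.factorial)) := by
  cases k with
  | zero => simp
  | succ m =>
    have hk : √((m : ℝ) + 1) ^ 2 = m + 1 := Real.sq_sqrt (by positivity)
    rw [Nat.factorial_succ, Nat.cast_mul, Real.sqrt_mul (by positivity), Real.sqrt_div (by positivity)]
    push_cast
    field_simp
    rw [hk]

theorem hermiteFun_three_term (k : ℕ) (x : ℝ) :
    x * hermiteFun k x =
      √(((k : ℝ) + 1) / 2) * hermiteFun (k + 1) x + √((k : ℝ) / 2) * hermiteFun (k - 1) x := by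
  have hrec : √2 * x * aeval (√2 * x) (hermite k) =
      aeval (√2 * x) (hermite (k + 1)) + k * aeval (√2 * x) (hermite (k - 1)) := by
    simpa using congrArg (aeval (√2 * x)) (X_mul_hermite k)
  have h2 : √2 * (√2)⁻¹ = 1 := mul_inv_cancel₀ (by positivity)
  have hA := sqrt_div_two_div_sqrt_factorial_succ k
  have hB := sqrt_div_two_div_sqrt_factorial_pred k
  simp only [hermiteFun_eq]
  set P := Real.pi ^ (-(1 : ℝ) / 4)
  set E := Real.exp (-x ^ 2 / 2)
  set f := (√(k.factorial : ℝ))⁻¹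
  linear_combination (-(P * aeval (√2 * x) (hermite (k + 1)) * E)) * hA
    - (P * aeval (√2 * x) (hermite (k - 1)) * E) * hB + (P * E * (√2)⁻¹ * f) * hrec
    - (P * f * x * aeval (√2 * x) (hermite k) * E) * h2

/-- **Christoffel–Darboux identity for Hermite functions.** -/
theorem hermite_christoffel_darboux (n : ℕ) (x y : ℝ) (hxy : x ≠ y) :
    ∑ k ∈ Finset.range (n + 1), hermiteFun k x * hermiteFun k y =
      Real.sqrt (((n : ℝ) + 1) / 2) *
        ((hermiteFun (n + 1) x * hermiteFun n y - hermiteFun n x * hermiteFun (n + 1) y)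
          / (x - y)) := by
  rw [mul_div_assoc', eq_div_iff (sub_ne_zero.mpr hxy), mul_comm]
  exact_mod_cast sub_mul_sum_mul_eq_of_three_term hermiteFun (fun k => √((k : ℝ) / 2))
    (fun k x => by exact_mod_cast hermiteFun_three_term k x) n x y
end

section
/- Let T > 0 and let f : ℝ → ℝ be a C¹ function with compact support contained in [−T, T]. Then for every N > 0 and every x ∈ ℝ with |x| ≥ 2T + 1, one has |F_N f(x)| ≤ (‖f‖_∞ + ‖f′‖_∞)/(πN) · log(1 + 2T/(|x| − T)), where ‖·‖_∞ denotes the supremum norm on ℝ. -/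
/-!
Away from `[-T, T]` the kernel `1 / (x - y)` is smooth, so integrating by parts against
`cos (N (x - y)) / N`, an antiderivative of `sin (N (x - y))`, gains the factor `1 / N`; the
boundary terms vanish because `f (±T) = 0`. Since `|x - y| ≥ 1`, the derivative of
`f y / (x - y)` is at most `(‖f‖_∞ + ‖f'‖_∞) / |x - y|`, and
`∫_{-T}^{T} dy / |x - y| = log ((|x| + T) / (|x| - T))`.
-/

open MeasureTheory Filter Set

/-- The Dirichlet operator `F_N g (x) = (1/π) ∫_ℝ sin(N(x−y))/(x−y) · g(y) dy`. -/
noncomputable def dirichletOp (N : ℝ) (g : ℝ → ℝ) (x : ℝ) : ℝ :=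
  (1 / Real.pi) * ∫ y : ℝ, Real.sin (N * (x - y)) / (x - y) * g y

lemma integral_inv_sub_eq_log {a b x : ℝ} (hab : a ≤ b) (hbx : b < x) :
    ∫ y in a..b, (x - y)⁻¹ = Real.log ((x - a) / (x - b)) := by
  rw [intervalIntegral.integral_comp_sub_left (fun u => u⁻¹) x,
    integral_inv_of_pos (by linarith) (by linarith)]

lemma integral_inv_abs_sub_eq_log {T x : ℝ} (hT : 0 ≤ T) (hx : T < |x|) :
    ∫ y in -T..T, |x - y|⁻¹ = Real.log (1 + 2 * T / (|x| - T)) := by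
  have h_even : ∫ y in -T..T, |x - y|⁻¹ = ∫ y in -T..T, |(|x| - y)|⁻¹ := by
    rcases abs_choice x with h | h
    · rw [h]
    · rw [h, ← neg_neg T, ← intervalIntegral.integral_comp_neg]
      simp only [neg_neg, sub_neg_eq_add, ← abs_neg (x + _), neg_add']
  have h_pos : EqOn (fun y => |(|x| - y)|⁻¹) (fun y => (|x| - y)⁻¹) (uIcc (-T) T) := by
    intro y hy
    rw [uIcc_of_le (by linarith)] at hy
    simp only [abs_of_pos (show 0 < |x| - y by linarith [hy.2])]
  rw [h_even, intervalIntegral.integral_congr h_pos,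
    integral_inv_sub_eq_log (by linarith) hx]
  congr 1
  field_simp [(by linarith : |x| - T ≠ 0)]
  ring

lemma abs_intervalIntegral_mul_sin_le {u u' g : ℝ → ℝ} {a b N : ℝ} (x : ℝ)
    (hab : a ≤ b) (hN : 0 < N) (hu : ∀ y ∈ Icc a b, HasDerivAt u (u' y) y)
    (hu' : IntervalIntegrable u' volume a b) (ha : u a = 0) (hb : u b = 0)
    (hg : IntervalIntegrable g volume a b) (hu'g : ∀ y ∈ Icc a b, |u' y| ≤ g y) :
    |∫ y in a..b, u y * Real.sin (N * (x - y))| ≤ (∫ y in a..b, g y) / N := by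
  have hv : ∀ y ∈ uIcc a b,
      HasDerivAt (fun y => Real.cos (N * (x - y)) / N) (Real.sin (N * (x - y))) y := by
    intro y _
    have hlin : HasDerivAt (fun y => N * (x - y)) (-N) y := by
      simpa using ((hasDerivAt_id y).const_sub x).const_mul N
    simpa [neg_mul_neg, mul_div_assoc, hN.ne'] using hlin.cos.div_const N
  have hsin : IntervalIntegrable (fun y => Real.sin (N * (x - y))) volume a b := by
    apply Continuous.intervalIntegrable
    fun_prop
  rw [← uIcc_of_le hab] at hu
  rw [intervalIntegral.integral_mul_deriv_eq_deriv_mul hu hv hu' hsin,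
    ha, hb, zero_mul, zero_mul, sub_zero, zero_sub, abs_neg, ← intervalIntegral.integral_div,
    ← Real.norm_eq_abs]
  refine intervalIntegral.norm_integral_le_of_norm_le hab (ae_of_all _ fun y hy => ?_)
    (hg.div_const N)
  rw [Real.norm_eq_abs, abs_mul, abs_div, abs_of_pos hN, mul_div_assoc']
  gcongr
  exact (mul_le_of_le_one_right (abs_nonneg _) (Real.abs_cos_le_one _)).trans
    (hu'g y (Ioc_subset_Icc_self hy))

lemma abs_mul_inv_add_mul_inv_sq_le {p q t : ℝ} (ht : 1 ≤ |t|) :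
    |p * t⁻¹ + q * (t ^ 2)⁻¹| ≤ (|p| + |q|) * |t|⁻¹ := by
  have h_inv_le : |t|⁻¹ ≤ 1 := inv_le_one_of_one_le₀ ht
  calc |p * t⁻¹ + q * (t ^ 2)⁻¹| ≤ |p| * |t|⁻¹ + |q| * (|t|⁻¹ * |t|⁻¹) := by
        refine (abs_add_le _ _).trans_eq ?_
        rw [abs_mul, abs_mul, abs_inv, abs_inv, abs_pow, sq, mul_inv]
    _ ≤ (|p| + |q|) * |t|⁻¹ := by
        have := mul_le_of_le_one_left (inv_nonneg.mpr (abs_nonneg t)) h_inv_le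
        nlinarith [abs_nonneg q]

lemma abs_dirichletOp_le {f g : ℝ → ℝ} {a b N x : ℝ} (hab : a ≤ b) (hN : 0 < N)
    (hf : ContDiff ℝ 1 f) (hsupp : Function.support f ⊆ Ioo a b) (hx : x ∉ Icc a b)
    (hg : IntervalIntegrable g volume a b)
    (hfg : ∀ y ∈ Icc a b, |deriv f y * (x - y)⁻¹ + f y * ((x - y) ^ 2)⁻¹| ≤ g y) :
    |dirichletOp N f x| ≤ (∫ y in a..b, g y) / (Real.pi * N) := by
  have hxy : ∀ y ∈ Icc a b, x - y ≠ 0 := fun y hy h => hx (sub_eq_zero.mp h ▸ hy)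
  have hzero : ∀ y ∉ Ioo a b, f y = 0 := fun y hy => Function.notMem_support.mp (hy <| hsupp ·)
  have h_restrict : ∫ y, Real.sin (N * (x - y)) / (x - y) * f y
      = ∫ y in a..b, f y * (x - y)⁻¹ * Real.sin (N * (x - y)) := by
    rw [intervalIntegral.integral_of_le hab, ← integral_Icc_eq_integral_Ioc,
      setIntegral_eq_integral_of_forall_compl_eq_zero]
    · congr 1 with y
      ring
    · intro y hy
      rw [hzero y (hy <| Ioo_subset_Icc_self ·), zero_mul, zero_mul]
  have hderiv : ∀ y ∈ Icc a b, HasDerivAt (fun y => f y * (x - y)⁻¹)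
      (deriv f y * (x - y)⁻¹ + f y * ((x - y) ^ 2)⁻¹) y := by
    intro y hy
    have hinv : HasDerivAt (fun y => (x - y)⁻¹) ((x - y) ^ 2)⁻¹ y := by
      have hsub : HasDerivAt (fun y => x - y) (-1) y := (hasDerivAt_id y).const_sub x
      have h : HasDerivAt (fun y => (x - y)⁻¹) (- -1 / (x - y) ^ 2) y := hsub.inv (hxy y hy)
      rwa [neg_neg, one_div] at h
    exact ((hf.differentiable one_ne_zero) y).hasDerivAt.mul hinv
  have hcont : ContinuousOn (fun y => deriv f y * (x - y)⁻¹ + f y * ((x - y) ^ 2)⁻¹)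
      (Icc a b) := by
    have hinv := (continuous_sub_left x).continuousOn.inv₀ hxy
    have hinv_sq := ((continuous_sub_left x).pow 2).continuousOn.inv₀
      fun y hy => pow_ne_zero 2 (hxy y hy)
    exact ((hf.continuous_deriv le_rfl).continuousOn.mul hinv).add
      (hf.continuous.continuousOn.mul hinv_sq)
  have hIBP := abs_intervalIntegral_mul_sin_le x hab hN hderiv
    (hcont.intervalIntegrable_of_Icc hab) (by simp [hzero a (by simp)])
    (by simp [hzero b (by simp)]) hg hfg
  rw [dirichletOp, h_restrict, abs_mul, abs_of_pos (by positivity), div_mul_eq_div_div_swap,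
    one_div_mul_eq_div]
  gcongr

/-- **Decay estimate for the Dirichlet operator away from the support.**
If `f` is `C¹` with support in `[−T, T]` and `|x| ≥ 2T + 1`, then
`|F_N f(x)| ≤ (‖f‖_∞ + ‖f′‖_∞)/(πN) · log(1 + 2T/(|x| − T))`. -/
theorem dirichletOp_decay_estimate (T : ℝ) (hT : 0 < T) (f : ℝ → ℝ)
    (hf : ContDiff ℝ 1 f) (hsupp : tsupport f ⊆ Set.Icc (-T) T)
    (N : ℝ) (hN : 0 < N) (x : ℝ) (hx : 2 * T + 1 ≤ |x|) :
    |dirichletOp N f x| ≤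
      ((⨆ y : ℝ, |f y|) + ⨆ y : ℝ, |deriv f y|) / (Real.pi * N)
        * Real.log (1 + 2 * T / (|x| - T)) := by
  have hcs : HasCompactSupport f := isCompact_Icc.of_isClosed_subset (isClosed_tsupport f) hsupp
  have hsupp_open : Function.support f ⊆ Ioo (-T) T := by
    rw [← interior_Icc]
    exact hf.continuous.isOpen_support.subset_interior_iff.mpr ((subset_tsupport f).trans hsupp)
  have hfar : ∀ y ∈ Icc (-T) T, 1 ≤ |x - y| := fun y hy =>
    calc 1 ≤ |x| - |y| := by linarith [abs_le.mpr hy]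
      _ ≤ |x - y| := abs_sub_abs_le_abs_sub x y
  set M := (⨆ y : ℝ, |f y|) + ⨆ y : ℝ, |deriv f y|
  have hM : ∀ y, |f y| + |deriv f y| ≤ M := fun y => add_le_add
    (le_ciSup (hf.continuous.abs.bddAbove_range_of_hasCompactSupport hcs.abs) y)
    (le_ciSup ((hf.continuous_deriv le_rfl).abs.bddAbove_range_of_hasCompactSupport
      hcs.deriv.abs) y)
  have hbound : ∀ y ∈ Icc (-T) T,
      |deriv f y * (x - y)⁻¹ + f y * ((x - y) ^ 2)⁻¹| ≤ M * |x - y|⁻¹ := fun y hy =>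
    (abs_mul_inv_add_mul_inv_sq_le (hfar y hy)).trans (by gcongr; linarith [hM y])
  have hint : IntervalIntegrable (fun y => M * |x - y|⁻¹) volume (-T) T :=
    (continuousOn_const.mul ((continuous_sub_left x).abs.continuousOn.inv₀ fun y hy =>
      (one_pos.trans_le (hfar y hy)).ne')).intervalIntegrable_of_Icc (by linarith)
  calc |dirichletOp N f x| ≤ (∫ y in -T..T, M * |x - y|⁻¹) / (Real.pi * N) :=
        abs_dirichletOp_le (by linarith) hN hf hsupp_open
          (fun hx' => absurd (hfar x hx') (by simp)) hint hbound
    _ = M / (Real.pi * N) * Real.log (1 + 2 * T / (|x| - T)) := by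
        rw [intervalIntegral.integral_const_mul, integral_inv_abs_sub_eq_log hT.le (by linarith)]
        ring
end

section
/- Let f : ℝ → ℝ be infinitely differentiable with compact support and let 1 < p < ∞. Then lim_{N→∞} ‖F_N f − f‖_{L^p(ℝ)} = 0. -/
open MeasureTheory Filter Set

open scoped FourierTransform Topology Real ENNReal NNReal

namespace DirichletAux

open Complex Real

/-- Strong measurability of the Dirichlet means. -/
lemma stronglyMeasurable_dirichletOp (f : ℝ → ℝ) (hf : Measurable f) (N : ℝ) :
    StronglyMeasurable (fun x => dirichletOp N f x) := by
  have h : StronglyMeasurable (fun p : ℝ × ℝ =>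
      Real.sin (N * (p.1 - p.2)) / (p.1 - p.2) * f p.2) := by
    apply Measurable.stronglyMeasurable
    exact (((Real.measurable_sin.comp ((measurable_fst.sub measurable_snd).const_mul N)).div
      (measurable_fst.sub measurable_snd)).mul (hf.comp measurable_snd))
  exact (h.integral_prod_right'.const_mul _)

lemma exp_sub_exp (θ : ℝ) :
    Complex.exp ((θ : ℂ) * Complex.I) - Complex.exp (-(θ : ℂ) * Complex.I)
      = 2 * Complex.sin θ * Complex.I := by
  rw [Complex.sin]
  have : Complex.I * Complex.I = -1 := Complex.I_mul_I
  field_simp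
  ring_nf
  rw [Complex.I_sq]
  ring

/-- The basic Dirichlet kernel integral computation. -/
lemma integral_exp_Ioc {W t : ℝ} (hW : 0 < W) (ht : t ≠ 0) :
    (∫ ξ in Ioc (-W) W, Complex.exp ((2 * π * (t * ξ) : ℝ) * Complex.I))
      = ((Real.sin (2 * π * W * t) / (π * t) : ℝ) : ℂ) := by
  have h1 : (∫ ξ in Ioc (-W) W, Complex.exp ((2 * π * (t * ξ) : ℝ) * Complex.I))
      = ∫ ξ in (-W)..W, Complex.exp ((((2 * π * t : ℝ)) * Complex.I) * (ξ : ℝ)) := by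
    rw [intervalIntegral.integral_of_le (by linarith)]
    congr 1 with ξ
    congr 1
    push_cast
    ring
  have hc : ((2 * π * t : ℝ) : ℂ) * Complex.I ≠ 0 := by
    apply mul_ne_zero _ Complex.I_ne_zero
    simpa using mul_ne_zero (mul_ne_zero two_ne_zero Real.pi_ne_zero) ht
  rw [h1, integral_exp_mul_complex hc]
  have he : Complex.exp ((2 * π * t : ℝ) * Complex.I * (W : ℝ))
        - Complex.exp ((2 * π * t : ℝ) * Complex.I * ((-W : ℝ) : ℝ))
      = 2 * Complex.sin ((2 * π * W * t : ℝ)) * Complex.I := by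
    have := exp_sub_exp (2 * π * W * t)
    rw [← this]
    congr 2
    · push_cast; ring
    · push_cast; ring
  rw [he]
  rw [← Complex.ofReal_sin]
  rw [div_eq_iff hc]
  push_cast
  have hπ : (π : ℂ) ≠ 0 := by exact_mod_cast Real.pi_ne_zero
  have htc : (t : ℂ) ≠ 0 := by exact_mod_cast ht
  field_simp

/-- Integrability of the Fourier transform of a smooth compactly supported function. -/
lemma fourier_integrable (g : ℝ → ℂ) (hg : ContDiff ℝ (⊤ : ℕ∞) g) (hs : HasCompactSupport g) :
    Integrable (𝓕 g) := by
  have hint : ∀ n : ℕ, (n : ℕ∞) ≤ (⊤ : ℕ∞) → Integrable (iteratedDeriv n g) := by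
    intro n _
    have h1 : Continuous (iteratedDeriv n g) :=
      hg.continuous_iteratedDeriv n (by exact_mod_cast le_top)
    have h2 : HasCompactSupport (iteratedDeriv n g) := by
      have h := (hs.iteratedFDeriv (𝕜 := ℝ) n).comp_left
        (g := fun L : ContinuousMultilinearMap ℝ (fun _ : Fin n => ℝ) ℂ => L (fun _ => 1)) rfl
      convert h using 1; ext x; simp [iteratedDeriv_eq_iteratedFDeriv]
    exact h1.integrable_of_hasCompactSupport h2
  have hg_int : Integrable g := by simpa [iteratedDeriv_zero] using hint 0 (by simp)
  have hFT : 𝓕 (iteratedDeriv 2 g)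
      = fun (ξ : ℝ) => (2 * π * Complex.I * ξ) ^ 2 • (𝓕 g ξ) :=
    Real.fourier_iteratedDeriv (N := (⊤ : ℕ∞)) hg hint (by simp)
  set A := ∫ v, ‖g v‖ with hA
  set B := ∫ v, ‖iteratedDeriv 2 g v‖ with hB
  have key : ∀ ξ : ℝ, ‖𝓕 g ξ‖ ≤ (A + B) * (1 + ξ ^ 2)⁻¹ := by
    intro ξ
    have h1 : ‖𝓕 g ξ‖ ≤ A := VectorFourier.norm_fourierIntegral_le_integral_norm _ _ _ _ _
    have h2 : ‖𝓕 (iteratedDeriv 2 g) ξ‖ ≤ B :=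
      VectorFourier.norm_fourierIntegral_le_integral_norm _ _ _ _ _
    have h3 : ‖𝓕 (iteratedDeriv 2 g) ξ‖ = (2 * π) ^ 2 * ξ ^ 2 * ‖𝓕 g ξ‖ := by
      rw [hFT]
      simp only [norm_smul, norm_pow]
      rw [show (2 * (π : ℂ) * Complex.I * ξ) = ((2 * π * ξ : ℝ) : ℂ) * Complex.I by push_cast; ring]
      rw [norm_mul, Complex.norm_I, Complex.norm_real, Real.norm_eq_abs, mul_one]
      rw [abs_mul, _root_.abs_of_nonneg (by positivity : (0:ℝ) ≤ 2*π), mul_pow, _root_.sq_abs]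
    have hbig : 1 ≤ (2 * π) ^ 2 := by nlinarith [Real.pi_gt_three]
    have hpos : (0:ℝ) < 1 + ξ ^ 2 := by positivity
    rw [← div_eq_mul_inv, le_div_iff₀ hpos]
    have h4 : ξ ^ 2 * ‖𝓕 g ξ‖ ≤ B := by
      nlinarith [norm_nonneg (𝓕 g ξ), sq_nonneg ξ,
        mul_nonneg (sq_nonneg ξ) (norm_nonneg (𝓕 g ξ))]
    nlinarith [norm_nonneg (𝓕 g ξ)]
  have hcont : Continuous (𝓕 g) :=
    VectorFourier.fourierIntegral_continuous Real.continuous_fourierChar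
      (by exact continuous_inner) hg_int
  refine (((integrable_inv_one_add_sq).const_mul (A + B)).mono'
    hcont.aestronglyMeasurable ?_)
  filter_upwards with ξ
  simpa [div_eq_mul_inv] using key ξ

lemma key (f : ℝ → ℝ) (hc : Continuous f) (hsupp : HasCompactSupport f) {N : ℝ} (hN : 0 < N)
    (x : ℝ) :
    (dirichletOp N f x : ℂ) =
      ∫ ξ in Ioc (-(N / (2 * π))) (N / (2 * π)),
        𝓕 (fun t : ℝ => (f t : ℂ)) ξ * Complex.exp ((2 * π * (ξ * x) : ℝ) * Complex.I) := by
  set W := N / (2 * π) with hWdef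
  have hW : 0 < W := div_pos hN (by positivity)
  set fc : ℝ → ℂ := fun t => (f t : ℂ) with hfc
  have hfc_cont : Continuous fc := Complex.continuous_ofReal.comp hc
  have hfc_int : Integrable fc := (hc.integrable_of_hasCompactSupport hsupp).ofReal
  set P : ℝ → ℝ → ℂ :=
    fun ξ y => fc y * Complex.exp ((2 * π * ((x - y) * ξ) : ℝ) * Complex.I) with hP
  have step1 : ∀ ξ : ℝ,
      𝓕 fc ξ * Complex.exp ((2 * π * (ξ * x) : ℝ) * Complex.I) = ∫ y, P ξ y := by
    intro ξ
    rw [Real.fourier_real_eq_integral_exp_smul, ← integral_mul_const]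
    congr 1 with y
    rw [smul_eq_mul, mul_comm (Complex.exp _) (fc y), mul_assoc, ← Complex.exp_add]
    congr 2
    push_cast
    ring
  have hPint : Integrable (Function.uncurry P)
      ((volume.restrict (Ioc (-W) W)).prod volume) := by
    have hmeas : AEStronglyMeasurable (Function.uncurry P)
        ((volume.restrict (Ioc (-W) W)).prod volume) := by
      apply Continuous.aestronglyMeasurable
      apply (hfc_cont.comp continuous_snd).mul
      apply Complex.continuous_exp.comp
      apply Continuous.mul _ continuous_const
      exact Complex.continuous_ofReal.comp (by fun_prop)
    apply Integrable.mono' (g := fun p : ℝ × ℝ => 1 * ‖fc p.2‖) ?_ hmeas ?_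
    · exact Integrable.mul_prod (integrableOn_const (C := (1:ℝ)) measure_Ioc_lt_top.ne) hfc_int.norm
    · filter_upwards with p
      simp only [Function.uncurry, hP, norm_mul, one_mul]
      rw [Complex.norm_exp_ofReal_mul_I, mul_one]
  have step2 : (∫ ξ in Ioc (-W) W, ∫ y, P ξ y) = ∫ y, ∫ ξ in Ioc (-W) W, P ξ y :=
    integral_integral_swap hPint
  have hae : ∀ᵐ y : ℝ, y ≠ x := by
    have h0 : (volume : Measure ℝ) {x} = 0 := measure_singleton x
    filter_upwards [compl_mem_ae_iff.2 h0] with y hy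
    simpa using hy
  have h2πW : 2 * π * W = N := by rw [hWdef]; field_simp
  have step3 : (∫ y, ∫ ξ in Ioc (-W) W, P ξ y)
      = ∫ y, ((f y * (Real.sin (N * (x - y)) / (π * (x - y))) : ℝ) : ℂ) := by
    apply integral_congr_ae
    filter_upwards [hae] with y hy
    have ht : x - y ≠ 0 := sub_ne_zero.2 (Ne.symm hy)
    simp only [hP]
    rw [integral_const_mul, integral_exp_Ioc hW ht, h2πW]
    push_cast
    ring
  have final : (∫ y, ((f y * (Real.sin (N * (x - y)) / (π * (x - y))) : ℝ) : ℂ))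
      = (dirichletOp N f x : ℂ) := by
    rw [show (∫ y, ((f y * (Real.sin (N * (x - y)) / (π * (x - y))) : ℝ) : ℂ))
        = (((∫ y, f y * (Real.sin (N * (x - y)) / (π * (x - y)))) : ℝ) : ℂ) from integral_ofReal]
    norm_cast
    rw [dirichletOp, ← integral_const_mul]
    congr 1 with y
    rw [mul_comm π (x - y), ← div_div]
    ring
  rw [setIntegral_congr_fun measurableSet_Ioc (fun ξ _ => step1 ξ), step2, step3, final]

lemma tail_tendsto (g : ℝ → ℂ) (hg : Integrable g) :
    Tendsto (fun N : ℝ => ∫ ξ in {ξ : ℝ | N / (2 * π) ≤ |ξ|}, ‖g ξ‖) atTop (𝓝 0) := by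
  have hmeas : ∀ N : ℝ, MeasurableSet {ξ : ℝ | N / (2 * π) ≤ |ξ|} := fun N =>
    (isClosed_le continuous_const _root_.continuous_abs).measurableSet
  have hrw : ∀ N : ℝ, (∫ ξ in {ξ : ℝ | N / (2 * π) ≤ |ξ|}, ‖g ξ‖)
      = ∫ ξ, Set.indicator {ξ : ℝ | N / (2 * π) ≤ |ξ|} (fun ξ => ‖g ξ‖) ξ := fun N =>
    (integral_indicator (hmeas N)).symm
  simp_rw [hrw]
  have h0 : (0:ℝ) = ∫ _ : ℝ, (0:ℝ) := by simp
  rw [h0]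
  apply tendsto_integral_filter_of_dominated_convergence (fun ξ => ‖g ξ‖)
  · filter_upwards with N
    exact hg.norm.aestronglyMeasurable.indicator (hmeas N)
  · filter_upwards with N
    filter_upwards with ξ
    rw [Real.norm_eq_abs,
      _root_.abs_of_nonneg (Set.indicator_nonneg (fun _ _ => norm_nonneg _) ξ)]
    exact Set.indicator_le_self' (fun _ _ => norm_nonneg _) ξ
  · exact hg.norm
  · filter_upwards with ξ
    have hev : ∀ᶠ N : ℝ in atTop,
        Set.indicator {ξ' : ℝ | N / (2 * π) ≤ |ξ'|} (fun ξ' => ‖g ξ'‖) ξ = 0 := by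
      filter_upwards [eventually_gt_atTop (2 * π * (|ξ| + 1))] with N hN
      apply Set.indicator_of_notMem
      simp only [mem_setOf_eq, not_le]
      rw [lt_div_iff₀ (by positivity : (0:ℝ) < 2 * π)]
      nlinarith [abs_nonneg ξ, Real.pi_pos]
    exact Tendsto.congr' (Filter.EventuallyEq.symm hev) tendsto_const_nhds

lemma tail_bound (f : ℝ → ℝ) (hc : Continuous f) (hsupp : HasCompactSupport f)
    {R : ℝ} (hR : tsupport f ⊆ Icc (-R) R) (N : ℝ) {x : ℝ} (hx : R + 1 ≤ |x|) :
    |dirichletOp N f x| ≤ (∫ y, |f y|) / (|x| - R) := by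
  have hfi : Integrable f := hc.integrable_of_hasCompactSupport hsupp
  have hden : 0 < |x| - R := by linarith
  have hbound : ∀ y : ℝ, ‖Real.sin (N * (x - y)) / (x - y) * f y‖ ≤ (|x| - R)⁻¹ * |f y| := by
    intro y
    by_cases hy : f y = 0
    · simp [hy]
    · have hmem : y ∈ Icc (-R) R := hR (subset_tsupport f (Function.mem_support.2 hy))
      have h1 : |y| ≤ R := abs_le.2 ⟨hmem.1, hmem.2⟩
      have hxy : |x| - R ≤ |x - y| := by
        have := abs_sub_abs_le_abs_sub x y
        linarith
      rw [norm_mul, Real.norm_eq_abs, Real.norm_eq_abs, abs_div]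
      apply mul_le_mul_of_nonneg_right _ (abs_nonneg _)
      rw [div_le_iff₀ (lt_of_lt_of_le hden hxy)]
      have h2 : (1:ℝ) ≤ (|x| - R)⁻¹ * |x - y| := by
        rw [← inv_mul_cancel₀ hden.ne']
        gcongr
      have h3 : |Real.sin (N * (x - y))| ≤ 1 := Real.abs_sin_le_one _
      linarith
  have hnorm : |∫ y, Real.sin (N * (x - y)) / (x - y) * f y| ≤ (|x| - R)⁻¹ * ∫ y, |f y| := by
    rw [← Real.norm_eq_abs, ← integral_const_mul]
    apply norm_integral_le_of_norm_le ((hfi.abs).const_mul _)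
    filter_upwards with y using hbound y
  have hπ : (0:ℝ) < 1 / π := by positivity
  have hπ1 : 1 / π ≤ 1 := by
    rw [div_le_one Real.pi_pos]
    linarith [Real.pi_gt_three]
  have hI : (0:ℝ) ≤ ∫ y, |f y| := integral_nonneg fun y => abs_nonneg _
  rw [dirichletOp, abs_mul, _root_.abs_of_pos hπ]
  calc 1 / π * |∫ y, Real.sin (N * (x - y)) / (x - y) * f y|
      ≤ 1 * ((|x| - R)⁻¹ * ∫ y, |f y|) := by
        apply mul_le_mul hπ1 hnorm (abs_nonneg _)
        norm_num
    _ = (∫ y, |f y|) / (|x| - R) := by rw [one_mul, div_eq_inv_mul]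

lemma diff_bound (f : ℝ → ℝ) (hf : ContDiff ℝ (⊤ : ℕ∞) f) (hsupp : HasCompactSupport f)
    (hFc_int : Integrable (𝓕 (fun t : ℝ => (f t : ℂ)))) {N : ℝ} (hN : 0 < N) (x : ℝ) :
    |dirichletOp N f x - f x| ≤
      ∫ ξ in {ξ : ℝ | N / (2 * π) ≤ |ξ|}, ‖𝓕 (fun t : ℝ => (f t : ℂ)) ξ‖ := by
  set W := N / (2 * π) with hWdef
  have hW : 0 < W := div_pos hN (by positivity)
  have hc : Continuous f := hf.continuous
  set fc : ℝ → ℂ := fun t => (f t : ℂ) with hfc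
  have hfc_cont : Continuous fc := Complex.continuous_ofReal.comp hc
  have hfc_int : Integrable fc := (hc.integrable_of_hasCompactSupport hsupp).ofReal
  have hFc_cont : Continuous (𝓕 fc) :=
    VectorFourier.fourierIntegral_continuous Real.continuous_fourierChar
      (by exact continuous_inner) hfc_int
  set Gx : ℝ → ℂ := fun ξ => 𝓕 fc ξ * Complex.exp ((2 * π * (ξ * x) : ℝ) * Complex.I) with hGx
  have hGx_cont : Continuous Gx := by
    apply hFc_cont.mul
    exact Complex.continuous_exp.comp (by fun_prop)
  have hGx_norm : ∀ ξ, ‖Gx ξ‖ = ‖𝓕 fc ξ‖ := by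
    intro ξ
    rw [hGx]
    simp only [norm_mul]
    rw [Complex.norm_exp_ofReal_mul_I, mul_one]
  have hGx_int : Integrable Gx := by
    refine hFc_int.norm.mono' hGx_cont.aestronglyMeasurable ?_
    filter_upwards with ξ
    rw [hGx_norm ξ]
  have hinv : (f x : ℂ) = ∫ ξ, Gx ξ := by
    have h := hfc_int.fourierInv_fourier_eq hFc_int (v := x) (Continuous.continuousAt hfc_cont)
    conv_lhs => rw [show ((f x : ℝ) : ℂ) = fc x from rfl, ← h]
    rw [Real.fourierInv_eq']
    congr 1 with ξ
    rw [smul_eq_mul, mul_comm]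
    congr 2
    simp only [RCLike.inner_apply, conj_trivial, mul_comm x ξ]
  have hdiff : ((dirichletOp N f x - f x : ℝ) : ℂ) = -∫ ξ in (Ioc (-W) W)ᶜ, Gx ξ := by
    push_cast
    rw [key f hc hsupp hN x, hinv]
    have hsplit := integral_add_compl (measurableSet_Ioc (a := -W) (b := W)) hGx_int
    rw [hWdef] at *
    linear_combination (hsplit : _)
  have h1 : |dirichletOp N f x - f x| = ‖((dirichletOp N f x - f x : ℝ) : ℂ)‖ := by
    rw [Complex.norm_real, Real.norm_eq_abs]
  rw [h1, hdiff, norm_neg]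
  calc ‖∫ ξ in (Ioc (-W) W)ᶜ, Gx ξ‖ ≤ ∫ ξ in (Ioc (-W) W)ᶜ, ‖Gx ξ‖ :=
        norm_integral_le_integral_norm _
    _ = ∫ ξ in (Ioc (-W) W)ᶜ, ‖𝓕 fc ξ‖ := by
        apply integral_congr_ae
        filter_upwards with ξ using hGx_norm ξ
    _ ≤ ∫ ξ in {ξ : ℝ | W ≤ |ξ|}, ‖𝓕 fc ξ‖ := by
        apply setIntegral_mono_set hFc_int.norm.integrableOn
        · filter_upwards with ξ using norm_nonneg _
        · apply HasSubset.Subset.eventuallyLE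
          intro ξ hξ
          simp only [mem_compl_iff, mem_Ioc, not_and, not_le, mem_setOf_eq] at hξ ⊢
          rcases le_or_gt ξ (-W) with h | h
          · exact le_abs.2 (Or.inr (by linarith))
          · exact le_abs.2 (Or.inl (hξ h).le)

end DirichletAux
open DirichletAux Complex Real in
/-- **`L^p` convergence of the Dirichlet means of a smooth compactly supported function.** -/
theorem dirichletOp_Lp_convergence (f : ℝ → ℝ)
    (hf : ContDiff ℝ (⊤ : ℕ∞) f) (hsupp : HasCompactSupport f)
    (p : ℝ) (hp : 1 < p) :
    Tendsto (fun N : ℝ =>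
        eLpNorm (fun x : ℝ => dirichletOp N f x - f x) (ENNReal.ofReal p) volume)
      atTop (nhds 0) := by
  have hc : Continuous f := hf.continuous
  set fc : ℝ → ℂ := fun t => (f t : ℂ) with hfc
  have hfc_smooth : ContDiff ℝ (⊤ : ℕ∞) fc := (Complex.ofRealCLM.contDiff.comp hf).of_le (by simp)
  have hfc_supp : HasCompactSupport fc := hsupp.comp_left (g := Complex.ofReal) Complex.ofReal_zero
  have hFc_int : Integrable (𝓕 fc) := fourier_integrable fc hfc_smooth hfc_supp
  have hfi : Integrable f := hc.integrable_of_hasCompactSupport hsupp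
  obtain ⟨R, hR0, hR⟩ : ∃ R : ℝ, 0 ≤ R ∧ tsupport f ⊆ Icc (-R) R := by
    obtain ⟨r, hr⟩ := hsupp.isBounded.subset_closedBall 0
    refine ⟨max r 0, le_max_right _ _, ?_⟩
    intro y hy
    have h := hr hy
    rw [Metric.mem_closedBall, Real.dist_eq, sub_zero] at h
    have h2 := abs_le.1 (h.trans (le_max_left r 0))
    exact ⟨by linarith [h2.1], by linarith [h2.2]⟩
  set I1 : ℝ := ∫ ξ, ‖𝓕 fc ξ‖ with hI1def
  set C0 : ℝ := ∫ y, |f y| with hC0def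
  have hI1 : 0 ≤ I1 := integral_nonneg fun _ => norm_nonneg _
  have hC0 : 0 ≤ C0 := integral_nonneg fun _ => abs_nonneg _
  set K : ℝ := (I1 + C0 + 1) * (R + 2) with hKdef
  have hK : 0 < K := mul_pos (by linarith) (by linarith)
  set ε : ℝ → ℝ := fun N => ∫ ξ in {ξ : ℝ | N / (2 * π) ≤ |ξ|}, ‖𝓕 fc ξ‖ with hεdef
  have hε : Tendsto ε atTop (𝓝 0) := tail_tendsto _ hFc_int
  have hε_le : ∀ N, ε N ≤ I1 := fun N =>
    setIntegral_le_integral hFc_int.norm (by filter_upwards with ξ using norm_nonneg _)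
  have hdiffb : ∀ N : ℝ, 0 < N → ∀ x, |dirichletOp N f x - f x| ≤ ε N :=
    fun N hN x => diff_bound f hf hsupp hFc_int hN x
  have hdom : ∀ N : ℝ, 0 < N → ∀ x : ℝ, |dirichletOp N f x - f x| ≤ K / (1 + |x|) := by
    intro N hN x
    rcases le_or_gt (|x|) (R + 1) with hx | hx
    · have h1 : |dirichletOp N f x - f x| ≤ I1 := (hdiffb N hN x).trans (hε_le N)
      have h2 : I1 ≤ K / (1 + |x|) := by
        rw [le_div_iff₀ (by positivity)]
        have e1 : I1 * (1 + |x|) ≤ I1 * (R + 2) := by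
          apply mul_le_mul_of_nonneg_left (by linarith) hI1
        have e2 : I1 * (R + 2) ≤ K := by rw [hKdef]; nlinarith
        linarith
      linarith
    · have hfx : f x = 0 := by
        apply image_eq_zero_of_notMem_tsupport
        intro hmem
        have h3 := hR hmem
        rw [mem_Icc] at h3
        have := abs_le.2 h3
        linarith
      rw [hfx, sub_zero]
      refine (tail_bound f hc hsupp hR N (by linarith)).trans ?_
      rw [div_le_div_iff₀ (by linarith) (by positivity), ← hC0def]
      have e1 : (1 + |x|) ≤ (R + 2) * (|x| - R) := by
        nlinarith [mul_nonneg (show (0:ℝ) ≤ R + 1 by linarith)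
          (show (0:ℝ) ≤ |x| - R - 1 by linarith)]
      have e2 : C0 * (1 + |x|) ≤ C0 * ((R + 2) * (|x| - R)) :=
        mul_le_mul_of_nonneg_left e1 hC0
      have e3 : C0 * ((R + 2) * (|x| - R)) ≤ K * (|x| - R) := by
        rw [hKdef]
        nlinarith [mul_nonneg (mul_nonneg (show (0:ℝ) ≤ I1 + 1 by linarith)
          (show (0:ℝ) ≤ R + 2 by linarith)) (show (0:ℝ) ≤ |x| - R by linarith)]
      linarith
  have hsm : ∀ N : ℝ, StronglyMeasurable (fun x => dirichletOp N f x - f x) := fun N =>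
    (stronglyMeasurable_dirichletOp f hc.measurable N).sub hc.stronglyMeasurable
  have hp0 : (0:ℝ) < p := by linarith
  have hKint : Integrable (fun x : ℝ => (K / (1 + |x|)) ^ p) := by
    have h1 : Integrable (fun x : ℝ => (1 + ‖x‖) ^ (-p)) :=
      integrable_one_add_norm (by simpa using hp)
    apply (h1.const_mul (K ^ p)).congr
    filter_upwards with x
    have hx1 : (0:ℝ) < 1 + |x| := by positivity
    rw [Real.norm_eq_abs, Real.rpow_neg hx1.le, Real.div_rpow hK.le hx1.le, div_eq_mul_inv]
  set q := ENNReal.ofReal p with hqdef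
  have hq0 : q ≠ 0 := by
    simp only [hqdef, ne_eq, ENNReal.ofReal_eq_zero, not_le]
    linarith
  have hqT : q ≠ ⊤ := ENNReal.ofReal_ne_top
  have hqR : q.toReal = p := ENNReal.toReal_ofReal hp0.le
  have key_e : ∀ N x, (‖dirichletOp N f x - f x‖₊ : ℝ≥0∞)
      = ENNReal.ofReal |dirichletOp N f x - f x| := by
    intro N x
    rw [← Real.norm_eq_abs, ofReal_norm]; rfl
  have hlint : Tendsto (fun N : ℝ => ∫⁻ x, (‖dirichletOp N f x - f x‖₊ : ℝ≥0∞) ^ p)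
      atTop (𝓝 0) := by
    have h0 : (0:ℝ≥0∞) = ∫⁻ _ : ℝ, (0:ℝ≥0∞) := by simp
    rw [h0]
    apply tendsto_lintegral_filter_of_dominated_convergence
      (bound := fun x => ENNReal.ofReal ((K / (1 + |x|)) ^ p))
    · filter_upwards with N
      exact (ENNReal.continuous_rpow_const.measurable).comp (hsm N).enorm
    · filter_upwards [eventually_gt_atTop (0:ℝ)] with N hN
      filter_upwards with x
      have h := hdom N hN x
      rw [key_e N x, ← ENNReal.ofReal_rpow_of_nonneg (by positivity) hp0.le]
      exact ENNReal.rpow_le_rpow (ENNReal.ofReal_le_ofReal h) hp0.le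
    · exact hKint.lintegral_lt_top.ne
    · filter_upwards with x
      have hx0 : Tendsto (fun N => |dirichletOp N f x - f x|) atTop (𝓝 0) := by
        apply squeeze_zero' (.of_forall fun N => abs_nonneg _) ?_ hε
        filter_upwards [eventually_gt_atTop (0:ℝ)] with N hN using hdiffb N hN x
      have h1 : Tendsto (fun N => ENNReal.ofReal |dirichletOp N f x - f x|) atTop (𝓝 0) := by
        simpa using ENNReal.tendsto_ofReal hx0
      have h2 := (ENNReal.continuous_rpow_const (y := p)).tendsto 0 |>.comp h1
      simp only [Function.comp_def, ENNReal.zero_rpow_of_pos hp0] at h2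
      simp_rw [key_e]
      exact h2
  have heq : ∀ N : ℝ, eLpNorm (fun x => dirichletOp N f x - f x) q volume
      = (∫⁻ x, (‖dirichletOp N f x - f x‖₊ : ℝ≥0∞) ^ p) ^ (1 / p) := by
    intro N
    rw [eLpNorm_eq_lintegral_rpow_enorm_toReal hq0 hqT, hqR]
    rfl
  simp_rw [heq]
  have h3 := (ENNReal.continuous_rpow_const (y := 1/p)).tendsto 0 |>.comp hlint
  simpa [Function.comp_def, one_div, ENNReal.zero_rpow_of_pos (show (0:ℝ) < p⁻¹ by positivity)] using h3
end

section
/- Let f : ℝ → ℝ be infinitely differentiable with compact support and let R > 0. Then F_N f converges to f uniformly on [−R, R] as N → ∞, i.e. lim_{N→∞} sup_{|x| ≤ R} |F_N f(x) − f(x)| = 0. -/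
open MeasureTheory Filter Set
open scoped FourierTransform Real

lemma DirAux.kernel_eq (N u : ℝ) (hu : u ≠ 0) :
    ∫ ξ in (-(N/(2*Real.pi)))..(N/(2*Real.pi)),
      Complex.exp (((2*Real.pi*u*ξ : ℝ) : ℂ) * Complex.I)
      = ((Real.sin (N*u) / (Real.pi * u) : ℝ) : ℂ) := by
  have hπ : (Real.pi : ℝ) ≠ 0 := Real.pi_ne_zero
  have hπc : (Real.pi : ℂ) ≠ 0 := Complex.ofReal_ne_zero.2 hπ
  have huc : (u : ℂ) ≠ 0 := Complex.ofReal_ne_zero.2 hu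
  have hre : ∀ ξ : ℝ, (((2*Real.pi*u*ξ : ℝ) : ℂ) * Complex.I)
      = (2*(Real.pi:ℂ)*u*Complex.I) * (ξ:ℂ) := by
    intro ξ; push_cast; ring
  simp_rw [hre]
  have hc : (2*(Real.pi:ℂ)*u*Complex.I) ≠ 0 := by
    simp [Complex.ext_iff, hπ, hu]
  rw [integral_exp_mul_complex hc]
  have h1 : (2*(Real.pi:ℂ)*u*Complex.I) * ((N/(2*Real.pi) : ℝ) : ℂ)
      = ((N*u : ℝ):ℂ) * Complex.I := by
    push_cast; field_simp
  have h2 : (2*(Real.pi:ℂ)*u*Complex.I) * ((-(N/(2*Real.pi)) : ℝ) : ℂ)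
      = ((-(N*u) : ℝ):ℂ) * Complex.I := by
    push_cast; field_simp
  rw [h1, h2, Complex.exp_mul_I, Complex.exp_mul_I]
  rw [← Complex.ofReal_cos, ← Complex.ofReal_sin, ← Complex.ofReal_cos, ← Complex.ofReal_sin]
  rw [Real.cos_neg, Real.sin_neg]
  push_cast
  field_simp
  ring

lemma DirAux.fourier_integrable {g : ℝ → ℂ} (hg : ContDiff ℝ (⊤:ℕ∞) g)
    (hgs : HasCompactSupport g) : Integrable (𝓕 g) := by
  have hgi : Integrable g := hg.continuous.integrable_of_hasCompactSupport hgs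
  have hgd : Differentiable ℝ g := hg.differentiable (by simp)
  have hg1 : ContDiff ℝ (⊤:ℕ∞) (deriv g) := (contDiff_infty_iff_deriv.1 hg).2
  have hg1s : HasCompactSupport (deriv g) := hgs.deriv
  have hg1i : Integrable (deriv g) := hg1.continuous.integrable_of_hasCompactSupport hg1s
  have hg1d : Differentiable ℝ (deriv g) := hg1.differentiable (by simp)
  have hg2 : ContDiff ℝ (⊤:ℕ∞) (deriv (deriv g)) := (contDiff_infty_iff_deriv.1 hg1).2
  have hg2i : Integrable (deriv (deriv g)) :=
    hg2.continuous.integrable_of_hasCompactSupport hg1s.deriv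
  have h1 : 𝓕 (deriv g) = fun ξ : ℝ => (2 * Real.pi * Complex.I * ξ) • 𝓕 g ξ :=
    Real.fourier_deriv hgi hgd hg1i
  have h2 : 𝓕 (deriv (deriv g)) = fun ξ : ℝ => (2 * Real.pi * Complex.I * ξ) • 𝓕 (deriv g) ξ :=
    Real.fourier_deriv hg1i hg1d hg2i
  set M0 := ∫ v : ℝ, ‖g v‖ with hM0
  set M2 := ∫ v : ℝ, ‖deriv (deriv g) v‖ with hM2
  have hbound0 : ∀ ξ : ℝ, ‖𝓕 g ξ‖ ≤ M0 := fun ξ =>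
    VectorFourier.norm_fourierIntegral_le_integral_norm _ _ _ _ _
  have hbound2 : ∀ ξ : ℝ, ‖𝓕 (deriv (deriv g)) ξ‖ ≤ M2 := fun ξ =>
    VectorFourier.norm_fourierIntegral_le_integral_norm _ _ _ _ _
  have hπ : (0:ℝ) < Real.pi := Real.pi_pos
  set C := M0 + M2 / (4 * Real.pi ^ 2) with hC
  have key : ∀ ξ : ℝ, ‖𝓕 g ξ‖ ≤ C * (1 + ξ ^ 2)⁻¹ := by
    intro ξ
    have e2 : ‖𝓕 (deriv (deriv g)) ξ‖ = (2*Real.pi)^2 * ξ^2 * ‖𝓕 g ξ‖ := by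
      rw [h2, h1]
      simp only [norm_smul, norm_mul, Complex.norm_I, Complex.norm_real,
        Complex.norm_two, Real.norm_eq_abs]
      rw [abs_of_pos hπ, ← _root_.sq_abs ξ]
      ring
    have hsq : ξ^2 * ‖𝓕 g ξ‖ ≤ M2 / (4 * Real.pi ^ 2) := by
      rw [le_div_iff₀ (by positivity)]
      have := hbound2 ξ
      rw [e2] at this
      nlinarith
    have h0 := hbound0 ξ
    have hpos : (0:ℝ) < 1 + ξ^2 := by positivity
    rw [mul_comm, ← div_eq_inv_mul, le_div_iff₀ hpos]
    calc ‖𝓕 g ξ‖ * (1 + ξ^2) = ‖𝓕 g ξ‖ + ξ^2 * ‖𝓕 g ξ‖ := by ring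
      _ ≤ M0 + M2 / (4 * Real.pi ^ 2) := add_le_add h0 hsq
      _ = C := hC.symm
  have hmeas : AEStronglyMeasurable (𝓕 g) volume :=
    (VectorFourier.fourierIntegral_continuous Real.continuous_fourierChar
      (by exact continuous_inner (𝕜 := ℝ) (E := ℝ)) hgi).aestronglyMeasurable
  refine (integrable_inv_one_add_sq.const_mul C).mono' hmeas ?_
  filter_upwards with ξ
  exact key ξ

lemma DirAux.dirichlet_eq (f : ℝ → ℝ) (hfc : Continuous f)
    (hfi : Integrable (fun y : ℝ => (f y : ℂ))) (N x : ℝ) (hN : 0 ≤ N) :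
    (dirichletOp N f x : ℂ)
      = ∫ ξ in Ioc (-(N/(2*Real.pi))) (N/(2*Real.pi)),
          Complex.exp (((2*Real.pi*x*ξ : ℝ) : ℂ) * Complex.I)
            * 𝓕 (fun y : ℝ => (f y : ℂ)) ξ := by
  have hπ : (0:ℝ) < Real.pi := Real.pi_pos
  set r : ℝ := N/(2*Real.pi) with hr
  have hrr : -r ≤ r := by
    have : 0 ≤ r := by positivity
    linarith
  set g : ℝ → ℂ := fun y => (f y : ℂ) with hg
  set S : Set ℝ := Ioc (-r) r with hS
  have hker : ∀ u : ℝ, u ≠ 0 →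
      (∫ ξ in S, Complex.exp (((2*Real.pi*u*ξ : ℝ) : ℂ) * Complex.I))
        = ((Real.sin (N*u) / (Real.pi * u) : ℝ) : ℂ) := by
    intro u hu
    rw [← intervalIntegral.integral_of_le hrr]
    exact DirAux.kernel_eq N u hu
  have step1 : (dirichletOp N f x : ℂ)
      = (1/(Real.pi:ℂ)) * ∫ y : ℝ, ((Real.sin (N*(x-y)) / (x-y) * f y : ℝ) : ℂ) := by
    have h : ∫ y : ℝ, ((Real.sin (N*(x-y)) / (x-y) * f y : ℝ) : ℂ)
        = ((∫ y : ℝ, Real.sin (N*(x-y)) / (x-y) * f y : ℝ) : ℂ) := integral_ofReal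
    rw [dirichletOp, Complex.ofReal_mul, ← h]
    norm_num
  have hae : ∀ᵐ y : ℝ, y ≠ x := by
    rw [ae_iff]
    have : {y : ℝ | ¬ y ≠ x} = {x} := by ext y; simp [eq_comm]
    rw [this]
    exact measure_singleton x
  have step2 : (∫ y : ℝ, ((Real.sin (N*(x-y)) / (x-y) * f y : ℝ) : ℂ))
      = ∫ y : ℝ, (Real.pi : ℂ) *
          ((∫ ξ in S, Complex.exp (((2*Real.pi*(x-y)*ξ : ℝ) : ℂ) * Complex.I)) * g y) := by
    refine integral_congr_ae ?_
    filter_upwards [hae] with y hy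
    have hxy : x - y ≠ 0 := sub_ne_zero.2 (Ne.symm hy)
    rw [hker (x-y) hxy]
    push_cast
    field_simp
    rfl
  have hπc : (Real.pi:ℂ) ≠ 0 := Complex.ofReal_ne_zero.2 hπ.ne'
  rw [step1, step2, integral_const_mul, ← mul_assoc, one_div, inv_mul_cancel₀ hπc, one_mul]
  haveI : IsFiniteMeasure (volume.restrict S) :=
    ⟨by rw [Measure.restrict_apply_univ]; exact measure_Ioc_lt_top⟩
  have hFint : Integrable (Function.uncurry fun y ξ =>
      Complex.exp (((2*Real.pi*(x-y)*ξ : ℝ):ℂ) * Complex.I) * g y)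
      (volume.prod (volume.restrict S)) := by
    have hb : Integrable (fun p : ℝ × ℝ => ‖g p.1‖ * 1) (volume.prod (volume.restrict S)) :=
      hfi.norm.mul_prod (integrable_const 1)
    refine hb.mono' ?_ ?_
    · refine Continuous.aestronglyMeasurable ?_
      refine Continuous.mul ?_ ?_
      · exact Complex.continuous_exp.comp ((Complex.continuous_ofReal.comp
          (by fun_prop)).mul continuous_const)
      · exact Complex.continuous_ofReal.comp (hfc.comp continuous_fst)
    · refine ae_of_all _ fun p => ?_
      rw [Function.uncurry]
      rw [norm_mul, Complex.norm_exp_ofReal_mul_I, mul_one]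
      simp
  have swap := integral_integral_swap hFint
  have step3 : (∫ y : ℝ, (∫ ξ in S, Complex.exp (((2*Real.pi*(x-y)*ξ : ℝ):ℂ) * Complex.I)) * g y)
      = ∫ y : ℝ, ∫ ξ in S, Complex.exp (((2*Real.pi*(x-y)*ξ : ℝ):ℂ) * Complex.I) * g y := by
    refine integral_congr_ae (ae_of_all _ fun y => ?_)
    exact (integral_mul_const _ _).symm
  have hfour : ∀ ξ : ℝ, (∫ y : ℝ, Complex.exp (((2*Real.pi*(x-y)*ξ : ℝ):ℂ) * Complex.I) * g y)
      = Complex.exp (((2*Real.pi*x*ξ : ℝ):ℂ) * Complex.I) * 𝓕 g ξ := by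
    intro ξ
    rw [Real.fourier_real_eq_integral_exp_smul, ← integral_const_mul]
    refine integral_congr_ae (ae_of_all _ fun y => ?_)
    simp only [smul_eq_mul]
    rw [← mul_assoc, ← Complex.exp_add]
    congr 2
    push_cast
    ring
  rw [step3, swap]
  exact integral_congr_ae (ae_of_all _ fun ξ => hfour ξ)

/-- **Locally uniform convergence of the Dirichlet means of a smooth compactly supported
function.** -/
theorem dirichletOp_uniform_convergence (f : ℝ → ℝ)
    (hf : ContDiff ℝ (⊤ : ℕ∞) f) (hsupp : HasCompactSupport f) (R : ℝ) (hR : 0 < R) :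
    Tendsto (fun N : ℝ => ⨆ x : Set.Icc (-R) R, |dirichletOp N f x.1 - f x.1|)
      atTop (nhds 0) := by
  have hπ : (0:ℝ) < Real.pi := Real.pi_pos
  set g : ℝ → ℂ := fun y => (f y : ℂ) with hg
  have hfc : Continuous f := hf.continuous
  have hgc : Continuous g := Complex.continuous_ofReal.comp hfc
  have hgsm : ContDiff ℝ (⊤:ℕ∞) g :=
    Complex.ofRealCLM.contDiff.comp (hf.of_le (by simp))
  have hgs : HasCompactSupport g := hsupp.comp_left (g := Complex.ofReal) Complex.ofReal_zero
  have hgi : Integrable g := hgc.integrable_of_hasCompactSupport hgs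
  have hFi : Integrable (𝓕 g) := DirAux.fourier_integrable hgsm hgs
  -- Fourier inversion as an explicit integral
  have hInv : ∀ x : ℝ, g x = ∫ ξ : ℝ,
      Complex.exp (((2*Real.pi*x*ξ : ℝ):ℂ) * Complex.I) * 𝓕 g ξ := by
    intro x
    have h1 : 𝓕⁻ (𝓕 g) x = g x := congrFun (hgc.fourierInv_fourier_eq hgi hFi) x
    rw [← h1, Real.fourierInv_eq']
    refine integral_congr_ae (ae_of_all _ fun ξ => ?_)
    simp only [smul_eq_mul, RCLike.inner_apply, conj_trivial]
    congr 2
    push_cast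
    ring
  -- the error functional
  set Err : ℝ → ℝ :=
    fun N => ∫ ξ in (Ioc (-(N/(2*Real.pi))) (N/(2*Real.pi)))ᶜ, ‖𝓕 g ξ‖ with hErrDef
  have hErr_nonneg : ∀ N, 0 ≤ Err N := fun N =>
    setIntegral_nonneg measurableSet_Ioc.compl fun ξ _ => norm_nonneg _
  have hErr_anti : ∀ {a b : ℝ}, a ≤ b → Err b ≤ Err a := by
    intro a b hab
    refine setIntegral_mono_set hFi.norm.integrableOn
      (ae_of_all _ fun ξ => norm_nonneg _) (HasSubset.Subset.eventuallyLE ?_)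
    have hdiv : a/(2*Real.pi) ≤ b/(2*Real.pi) := by gcongr
    exact compl_subset_compl.2 (Ioc_subset_Ioc (neg_le_neg hdiv) hdiv)
  -- uniform bound
  have hbound : ∀ N : ℝ, 0 ≤ N → ∀ x : ℝ, |dirichletOp N f x - f x| ≤ Err N := by
    intro N hN0 x
    set S : Set ℝ := Ioc (-(N/(2*Real.pi))) (N/(2*Real.pi)) with hSdef
    set φ : ℝ → ℂ := fun ξ => Complex.exp (((2*Real.pi*x*ξ : ℝ):ℂ) * Complex.I) * 𝓕 g ξ with hφ
    have hφi : Integrable φ := by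
      refine hFi.norm.mono' ?_ (ae_of_all _ fun ξ => ?_)
      · exact ((Complex.continuous_exp.comp ((Complex.continuous_ofReal.comp
          (by fun_prop)).mul continuous_const)).aestronglyMeasurable.mul hFi.aestronglyMeasurable)
      · rw [hφ]
        simp only []
        rw [norm_mul, Complex.norm_exp_ofReal_mul_I, one_mul]
    have hsplit := integral_add_compl (measurableSet_Ioc
      (a := -(N/(2*Real.pi))) (b := N/(2*Real.pi))) hφi
    have hkey : ((dirichletOp N f x - f x : ℝ) : ℂ) = -(∫ ξ in Sᶜ, φ ξ) := by
      push_cast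
      rw [DirAux.dirichlet_eq f hfc hgi N x hN0]
      have : ((f x : ℝ) : ℂ) = g x := rfl
      rw [this, hInv x, ← hsplit]
      ring
    have habs : |dirichletOp N f x - f x| = ‖((dirichletOp N f x - f x : ℝ):ℂ)‖ := by
      rw [Complex.norm_real]
      exact (Real.norm_eq_abs _).symm
    rw [habs, hkey, norm_neg]
    refine (norm_integral_le_integral_norm _).trans_eq ?_
    refine integral_congr_ae (ae_of_all _ fun ξ => ?_)
    rw [hφ]
    simp only []
    rw [norm_mul, Complex.norm_exp_ofReal_mul_I, one_mul]
  -- convergence of the error along ℕ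
  have hNat : Tendsto (fun n : ℕ => Err n) atTop (nhds 0) := by
    have hrepr : ∀ n : ℕ, Err (n : ℝ) = ∫ ξ : ℝ,
        ((Ioc (-((n:ℝ)/(2*Real.pi))) ((n:ℝ)/(2*Real.pi)))ᶜ).indicator (fun ξ => ‖𝓕 g ξ‖) ξ := by
      intro n
      rw [integral_indicator measurableSet_Ioc.compl]
    simp_rw [hrepr]
    rw [show (0:ℝ) = ∫ _ : ℝ, (0:ℝ) from by simp]
    refine tendsto_integral_of_dominated_convergence (fun ξ => ‖𝓕 g ξ‖)
      (fun n => hFi.norm.aestronglyMeasurable.indicator measurableSet_Ioc.compl)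
      hFi.norm (fun n => ae_of_all _ fun ξ => ?_) (ae_of_all _ fun ξ => ?_)
    · exact (norm_indicator_le_norm_self _ _).trans (le_of_eq (norm_norm _))
    · have hev : ∀ᶠ n : ℕ in atTop,
          ((Ioc (-((n:ℝ)/(2*Real.pi))) ((n:ℝ)/(2*Real.pi)))ᶜ).indicator
            (fun ξ => ‖𝓕 g ξ‖) ξ = 0 := by
        have hn : ∀ᶠ n : ℕ in atTop, 2*Real.pi*(|ξ|+1) ≤ (n:ℝ) :=
          tendsto_natCast_atTop_atTop.eventually_ge_atTop _
        filter_upwards [hn] with n hn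
        have hr : |ξ| + 1 ≤ (n:ℝ)/(2*Real.pi) := by
          rw [le_div_iff₀ (by positivity)]
          nlinarith
        have hmem : ξ ∈ Ioc (-((n:ℝ)/(2*Real.pi))) ((n:ℝ)/(2*Real.pi)) := by
          constructor
          · have := neg_abs_le ξ
            nlinarith
          · have := le_abs_self ξ
            linarith
        exact indicator_of_notMem (by simpa using hmem) _
      exact Tendsto.congr' (hev.mono fun n h => h.symm) tendsto_const_nhds
  have hfloor : Tendsto (fun N : ℝ => Err (⌊N⌋₊ : ℕ)) atTop (nhds 0) :=
    hNat.comp tendsto_nat_floor_atTop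
  haveI hne : Nonempty (Set.Icc (-R) R) :=
    Set.Nonempty.to_subtype (nonempty_Icc.2 (by linarith))
  refine tendsto_of_tendsto_of_tendsto_of_le_of_le' tendsto_const_nhds hfloor ?_ ?_
  · filter_upwards with N
    exact Real.iSup_nonneg fun x => abs_nonneg _
  · filter_upwards [eventually_ge_atTop (0:ℝ)] with N hN0
    refine ciSup_le fun x => ?_
    exact (hbound N hN0 x.1).trans (hErr_anti (Nat.floor_le hN0))
end

section
/- Let N > 0 and for an integer k ≥ 0 set I_k = ∪_{m=0}^∞ ( (k/4)(π/N) + m(π/N), ((k+1)/4)(π/N) + m(π/N) ). Let j, k ≥ 0 be integers with j + k ≡ 1 (mod 4). Then for every x ∈ I_j and y ∈ I_k there exists an integer ℓ such that π/(4N) ≤ x + y − ℓ·π/N ≤ 3π/(4N); consequently |sin(N(x+y))| ≥ √2/2. -/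
open Real Set

lemma sin_ge_sqrt2_aux {θ : ℝ} (h1 : Real.pi/4 ≤ θ) (h2 : θ ≤ 3*Real.pi/4) :
    Real.sqrt 2 / 2 ≤ Real.sin θ := by
  have hpi := Real.pi_pos
  rcases le_total θ (Real.pi/2) with h | h
  · rw [← Real.sin_pi_div_four]
    exact Real.strictMonoOn_sin.monotoneOn ⟨by linarith, by linarith⟩ ⟨by linarith, by linarith⟩ h1
  · rw [← Real.sin_pi_div_four, ← Real.sin_pi_sub θ]
    exact Real.strictMonoOn_sin.monotoneOn ⟨by linarith, by linarith⟩ ⟨by linarith, by linarith⟩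
      (by linarith)

/-- **The sine lower bound on the distinguished intervals.**
For `I_k = ⋃_{m≥0} ((k/4)(π/N) + m(π/N), ((k+1)/4)(π/N) + m(π/N))` and `j + k ≡ 1 (mod 4)`,
every `x ∈ I_j`, `y ∈ I_k` satisfy `π/(4N) ≤ x + y ≤ 3π/(4N) (mod π/N)`, and consequently
`|sin(N(x+y))| ≥ √2/2`. -/
theorem sin_lower_bound_on_intervals (N : ℝ) (hN : 0 < N) (j k : ℕ)
    (hjk : (j + k) % 4 = 1) (x y : ℝ)
    (hx : x ∈ ⋃ m : ℕ, Set.Ioo ((j : ℝ) / 4 * (Real.pi / N) + (m : ℝ) * (Real.pi / N))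
      (((j : ℝ) + 1) / 4 * (Real.pi / N) + (m : ℝ) * (Real.pi / N)))
    (hy : y ∈ ⋃ m : ℕ, Set.Ioo ((k : ℝ) / 4 * (Real.pi / N) + (m : ℝ) * (Real.pi / N))
      (((k : ℝ) + 1) / 4 * (Real.pi / N) + (m : ℝ) * (Real.pi / N))) :
    (∃ l : ℤ, Real.pi / (4 * N) ≤ x + y - (l : ℝ) * (Real.pi / N) ∧
        x + y - (l : ℝ) * (Real.pi / N) ≤ 3 * Real.pi / (4 * N)) ∧
      Real.sqrt 2 / 2 ≤ |Real.sin (N * (x + y))| := by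
  have hc : 0 < Real.pi / N := div_pos Real.pi_pos hN
  obtain ⟨m, hm1, hm2⟩ := mem_iUnion.mp hx
  obtain ⟨n, hn1, hn2⟩ := mem_iUnion.mp hy
  set q := (j + k) / 4 with hq
  have hjk4 : j + k = 4 * q + 1 := by omega
  have hjkr : ((j : ℝ) + k) = 4 * q + 1 := by exact_mod_cast congrArg (Nat.cast : ℕ → ℝ) hjk4
  set c := Real.pi / N with hcdef
  set L : ℝ := (q : ℝ) + m + n with hL
  have hkey1 : c/4 + L * c ≤ x + y - 0 := by nlinarith [hm1, hn1]
  have hkey2 : x + y ≤ 3*c/4 + L * c := by nlinarith [hm2, hn2]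
  have hEq1 : Real.pi / (4 * N) = c / 4 := by rw [hcdef]; ring
  have hEq2 : 3 * Real.pi / (4 * N) = 3 * c / 4 := by rw [hcdef]; ring
  have hcast : (((q : ℤ) + m + n : ℤ) : ℝ) = L := by push_cast [hL]; ring
  have hlow : Real.pi / (4 * N) ≤ x + y - L * c := by rw [hEq1]; linarith
  have hhigh : x + y - L * c ≤ 3 * Real.pi / (4 * N) := by rw [hEq2]; linarith
  refine ⟨⟨(q : ℤ) + m + n, by rw [hcast]; exact hlow, by rw [hcast]; exact hhigh⟩, ?_⟩
  -- sine bound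
  have hNne : (N : ℝ) ≠ 0 := ne_of_gt hN
  set θ : ℝ := N * (x + y) - L * Real.pi with hθ
  have hmul : θ = N * (x + y - L * c) := by rw [hθ, hcdef]; field_simp
  have hθ1 : Real.pi / 4 ≤ θ := by
    rw [hmul]
    have := mul_le_mul_of_nonneg_left hlow (le_of_lt hN)
    calc Real.pi / 4 = N * (Real.pi / (4 * N)) := by field_simp
    _ ≤ _ := this
  have hθ2 : θ ≤ 3 * Real.pi / 4 := by
    rw [hmul]
    have := mul_le_mul_of_nonneg_left hhigh (le_of_lt hN)
    calc N * (x + y - L * c) ≤ N * (3 * Real.pi / (4 * N)) := this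
    _ = 3 * Real.pi / 4 := by field_simp
  have hrw : N * (x + y) = θ + ((q : ℤ) + m + n : ℤ) * Real.pi := by
    rw [hθ, hcast]; ring
  rw [hrw, Real.sin_add_int_mul_pi, abs_mul]
  have h1 : |(-1:ℝ) ^ ((q:ℤ) + m + n)| = 1 := by
    rcases Int.even_or_odd ((q:ℤ) + m + n) with h | h
    · rw [h.neg_one_zpow, abs_one]
    · rw [Odd.neg_one_zpow h, abs_neg, abs_one]
  rw [h1, one_mul]
  exact le_trans (sin_ge_sqrt2_aux hθ1 hθ2) (le_abs_self _)
end
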